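/- arXiv:2505.00241 — 2 statements merged into one kernel-verified Lean document; each statement's English description precedes it below -/
import Mathlib

section
/- Let b ∈ k with b ∉ {2, −2}. There exist u, λ ∈ k with u ≠ 0, λ ≠ 0 and ε ∈ {1, −1} such that λ²·f_b(X) = Σ_{j=0}^{9} cⱼ·εʲ·(X+u)ʲ·(X−u)^{10−j} in k[X] (where cⱼ is the coefficient of Xʲ in f_0, i.e. λ²·f_b(x) = (x−u)¹⁰·f_0(ε(x+u)/(x−u))), if and only if b = 6 or b = −6. -/
open Polynomial

/-- The polynomial `f_a = X (X⁴ − 1)(X⁴ + a X² + 1)` over a field `k`. -/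
noncomputable def f {k : Type*} [Field k] (a : k) : k[X] :=
  X * (X ^ 4 - 1) * (X ^ 4 + C a * X ^ 2 + 1)

private lemma f_zero_eq {k : Type*} [Field k] : f (0 : k) = X ^ 9 - X := by
  unfold f; simp; ring

private lemma sum_expand {k : Type*} [Field k] (u ε : k) :
    (∑ j ∈ Finset.range 10, C ((f (0 : k)).coeff j * ε ^ j) * (X + C u) ^ j * (X - C u) ^ (10 - j))
    = C (-ε) * (X + C u) * (X - C u) ^ 9 + C (ε ^ 9) * (X + C u) ^ 9 * (X - C u) := by
  simp only [Finset.sum_range_succ, Finset.sum_range_zero, f_zero_eq, coeff_sub, coeff_X_pow,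
    coeff_X]
  norm_num

private lemma key_identity {k : Type*} [Field k] (u : k) (hu4 : u ^ 4 = 1) :
    C (16 * u) * f (6 * u ^ 2) =
      C (-(1:k)) * (X + C u) * (X - C u) ^ 9 + C ((1:k) ^ 9) * (X + C u) ^ 9 * (X - C u) := by
  have hCu4 : (C u : k[X]) ^ 4 = 1 := by rw [← map_pow, hu4, map_one]
  simp only [f, map_mul, map_pow, map_neg, map_ofNat, map_one]
  linear_combination (96 * (C u : k[X]) ^ 3 * X ^ 3 + 16 * C u * ((C u) ^ 4 + 1) * X) * hCu4

theorem stmt_7 (p : ℕ) (hp : p.Prime) (hp7 : 7 ≤ p)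
    (k : Type*) [Field k] [IsAlgClosed k] [CharP k p]
    (b : k) (hb : b ∉ ({2, -2} : Set k)) :
    (∃ u lam ε : k, u ≠ 0 ∧ lam ≠ 0 ∧ ε ∈ ({1, -1} : Set k) ∧
      C (lam ^ 2) * f b =
        ∑ j ∈ Finset.range 10,
          C ((f (0 : k)).coeff j * ε ^ j) * (X + C u) ^ j * (X - C u) ^ (10 - j)) ↔
    (b = 6 ∨ b = -6) := by
  have h6 : (6 : k) ≠ 0 := by
    intro h
    have hd : p ∣ 6 := by exact_mod_cast (CharP.cast_eq_zero_iff k p 6).mp (by exact_mod_cast h)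
    have := Nat.le_of_dvd (by norm_num) hd; omega
  have h16 : (16 : k) ≠ 0 := by
    intro h
    have hd : p ∣ 16 := by exact_mod_cast (CharP.cast_eq_zero_iff k p 16).mp (by exact_mod_cast h)
    have h2 : p ∣ 2 := hp.dvd_of_dvd_pow (show p ∣ 2 ^ 4 by norm_num at hd ⊢; exact hd)
    have := Nat.le_of_dvd (by norm_num) h2; omega
  constructor
  · rintro ⟨u, lam, ε, hu, hlam, hε, h⟩
    rw [sum_expand] at h
    have hε9 : ε ^ 9 = ε := by
      rcases hε with h | h <;> subst h <;> norm_num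
    rw [hε9] at h
    have h' : C (lam ^ 2) * X ^ 9 + C (lam ^ 2 * b) * X ^ 7 + C (-(lam ^ 2 * b)) * X ^ 3
          + C (-(lam ^ 2)) * X
        = C (16 * u * ε) * X ^ 9 + C (96 * u ^ 3 * ε) * X ^ 7 + C (-(96 * u ^ 7 * ε)) * X ^ 3
          + C (-(16 * u ^ 9 * ε)) * X := by
      simp only [f, map_mul, map_pow, map_neg, map_ofNat] at h ⊢
      linear_combination h
    have e9 : lam ^ 2 = 16 * u * ε := by
      have h9 := congrArg (fun q : k[X] => q.coeff 9) h'
      simp only [coeff_add, coeff_C_mul, coeff_X_pow, coeff_X] at h9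
      norm_num at h9; exact h9
    have e7 : lam ^ 2 * b = 96 * u ^ 3 * ε := by
      have h7 := congrArg (fun q : k[X] => q.coeff 7) h'
      simp only [coeff_add, coeff_C_mul, coeff_X_pow, coeff_X] at h7
      norm_num at h7; exact h7
    have e3 : lam ^ 2 * b = 96 * u ^ 7 * ε := by
      have h3 := congrArg (fun q : k[X] => q.coeff 3) h'
      simp only [coeff_add, coeff_C_mul, coeff_X_pow, coeff_X] at h3
      norm_num at h3; exact h3
    have hl2 : lam ^ 2 ≠ 0 := pow_ne_zero 2 hlam
    have hb2 : b = 6 * u ^ 2 := by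
      have h0 : lam ^ 2 * (b - 6 * u ^ 2) = 0 := by linear_combination e7 - 6 * u ^ 2 * e9
      exact sub_eq_zero.mp ((mul_eq_zero.mp h0).resolve_left hl2)
    have hb6 : b = 6 * u ^ 6 := by
      have h0 : lam ^ 2 * (b - 6 * u ^ 6) = 0 := by linear_combination e3 - 6 * u ^ 6 * e9
      exact sub_eq_zero.mp ((mul_eq_zero.mp h0).resolve_left hl2)
    have hu4 : u ^ 4 = 1 := by
      have h0 : 6 * u ^ 2 * (u ^ 4 - 1) = 0 := by linear_combination hb2 - hb6
      have h1 := (mul_eq_zero.mp h0).resolve_left (mul_ne_zero h6 (pow_ne_zero 2 hu))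
      exact sub_eq_zero.mp h1
    have : (u ^ 2 - 1) * (u ^ 2 + 1) = 0 := by linear_combination hu4
    rcases mul_eq_zero.mp this with h1 | h1
    · left
      rw [hb2, sub_eq_zero.mp h1]; ring
    · right
      rw [hb2, eq_neg_of_add_eq_zero_left h1]; ring
  · rintro (rfl | rfl)
    · refine ⟨1, 4, 1, one_ne_zero, ?_, Or.inl rfl, ?_⟩
      · intro h
        exact h16 (by rw [show (16 : k) = 4 * 4 by norm_num, h, mul_zero])
      · rw [sum_expand, show ((4 : k) ^ 2) = 16 by norm_num]
        have hk := key_identity (1 : k) (by norm_num)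
        simpa using hk
    · obtain ⟨i, hi⟩ := IsAlgClosed.exists_pow_nat_eq (-1 : k) (n := 2) two_pos
      have hi0 : i ≠ 0 := by
        intro h; rw [h] at hi; simp at hi
      obtain ⟨lam, hl⟩ := IsAlgClosed.exists_pow_nat_eq (16 * i : k) (n := 2) two_pos
      have hl0 : lam ≠ 0 := by
        intro h; rw [h] at hl
        exact mul_ne_zero h16 hi0 (by simpa using hl.symm)
      refine ⟨i, lam, 1, hi0, hl0, Or.inl rfl, ?_⟩
      rw [sum_expand, hl]
      have := key_identity i (by rw [show (4:ℕ) = 2 * 2 by norm_num, pow_mul, hi]; norm_num)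
      rw [show (-6 : k) = 6 * i ^ 2 by rw [hi]; ring]
      exact this
end

section
/- Let a, b ∈ k with a, b ∉ {2, −2}, a ∉ {0, 6, −6}, and a² ≠ −12 (so that Aut(H_a) ≅ Q₈). There exist u, λ ∈ k with u ≠ 0 and λ ≠ 0 such that either λ²·f_b(X) = f_a(uX) in k[X], or λ²·f_b(X) = Σ_{j=0}^{9} cⱼ·uʲ·X^{10−j} in k[X] (where cⱼ is the coefficient of Xʲ in f_a, i.e. λ²·f_b(x) = x¹⁰·f_a(u/x)), if and only if a² = b². -/
open Polynomial

lemma f_eq {k : Type*} [Field k] (a : k) :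
    f a = X ^ 9 + C a * X ^ 7 - C a * X ^ 3 - X := by
  unfold f; ring

lemma comp_eq {k : Type*} [Field k] (a u : k) :
    (f a).comp (C u * X) =
      C (u ^ 9) * X ^ 9 + C (a * u ^ 7) * X ^ 7 - C (a * u ^ 3) * X ^ 3 - C u * X := by
  rw [f_eq]
  simp only [add_comp, sub_comp, mul_comp, pow_comp, X_comp, C_comp, map_mul, map_pow]
  ring

lemma sum_eq {k : Type*} [Field k] (a u : k) :
    ∑ j ∈ Finset.range 10, C ((f a).coeff j * u ^ j) * X ^ (10 - j) =
      C (-u) * X ^ 9 + C (-(a * u ^ 3)) * X ^ 7 - C (-(a * u ^ 7)) * X ^ 3 - C (-(u ^ 9)) * X := by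
  simp [Finset.sum_range_succ, f_eq, coeff_X, coeff_X_pow, coeff_C_mul]

lemma extract {k : Type*} [Field k] (a b u s α β γ δ : k)
    (E : C s * f b = C α * X ^ 9 + C β * X ^ 7 - C γ * X ^ 3 - C δ * X) :
    s = α ∧ s * b = β ∧ s * b = γ ∧ s = δ := by
  rw [f_eq] at E
  have e9 := congrArg (fun P : k[X] => P.coeff 9) E
  have e7 := congrArg (fun P : k[X] => P.coeff 7) E
  have e3 := congrArg (fun P : k[X] => P.coeff 3) E
  have e1 := congrArg (fun P : k[X] => P.coeff 1) E
  simp only [coeff_add, coeff_sub, coeff_C_mul, coeff_X_pow, coeff_X] at e9 e7 e3 e1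
  norm_num at e9 e7 e3 e1
  exact ⟨e9, e7, e3, e1⟩

theorem stmt_13 (p : ℕ) (hp : p.Prime) (hp7 : 7 ≤ p)
    (k : Type*) [Field k] [IsAlgClosed k] [CharP k p]
    (a b : k) (ha2 : a ∉ ({2, -2} : Set k)) (hb2 : b ∉ ({2, -2} : Set k))
    (ha : a ∉ ({0, 6, -6} : Set k)) (ha12 : a ^ 2 ≠ -12) :
    (∃ u lam : k, u ≠ 0 ∧ lam ≠ 0 ∧
      (C (lam ^ 2) * f b = (f a).comp (C u * X) ∨
       C (lam ^ 2) * f b =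
         ∑ j ∈ Finset.range 10, C ((f a).coeff j * u ^ j) * X ^ (10 - j))) ↔
    a ^ 2 = b ^ 2 := by
  constructor
  · rintro ⟨u, lam, hu, hlam, hcase | hcase⟩
    · rw [comp_eq] at hcase
      obtain ⟨e9, e7, e3, e1⟩ := extract a b u (lam ^ 2) _ _ _ _ hcase
      -- lam^2 = u, lam^2 = u^9, so u^9 = u; u*b = a*u^7, u*b = a*u^3
      have h9 : u ^ 9 = u := by linear_combination e1 - e9
      have h7 : u * b = a * u ^ 7 := by linear_combination e7 - b * e1
      have h3 : u * b = a * u ^ 3 := by linear_combination e3 - b * e1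
      have key : a ^ 2 * u ^ 2 = b ^ 2 * u ^ 2 := by
        linear_combination (-(u * b)) * h7 + (-(a * u ^ 7)) * h3 + (-(a ^ 2 * u)) * h9
      exact mul_right_cancel₀ (pow_ne_zero 2 hu) key
    · rw [sum_eq] at hcase
      obtain ⟨e9, e7, e3, e1⟩ := extract a b u (lam ^ 2) _ _ _ _ hcase
      -- lam^2 = -u, lam^2 * b = -(a u^3), lam^2 * b = -(a u^7), lam^2 = -(u^9)
      have h9 : u ^ 9 = u := by linear_combination e1 - e9
      have h7 : u * b = a * u ^ 7 := by linear_combination -e3 + b * e9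
      have h3 : u * b = a * u ^ 3 := by linear_combination -e7 + b * e9
      have key : a ^ 2 * u ^ 2 = b ^ 2 * u ^ 2 := by
        linear_combination (-(u * b)) * h7 + (-(a * u ^ 7)) * h3 + (-(a ^ 2 * u)) * h9
      exact mul_right_cancel₀ (pow_ne_zero 2 hu) key
  · intro hab
    have hcases : b = a ∨ b = -a := by
      have h0 : (b - a) * (b + a) = 0 := by linear_combination -hab
      rcases mul_eq_zero.mp h0 with h | h
      · left; linear_combination h
      · right; linear_combination h
    rcases hcases with rfl | rfl
    · exact ⟨1, 1, one_ne_zero, one_ne_zero, Or.inl (by simp)⟩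
    · obtain ⟨u, hu2⟩ := IsAlgClosed.exists_pow_nat_eq (-1 : k) (n := 2) (by norm_num)
      have hu : u ≠ 0 := by
        intro h; rw [h] at hu2; simp at hu2
      obtain ⟨lam, hlam2⟩ := IsAlgClosed.exists_pow_nat_eq u (n := 2) (by norm_num)
      have hlam : lam ≠ 0 := by
        intro h; rw [h] at hlam2; simp at hlam2; exact hu hlam2.symm
      refine ⟨u, lam, hu, hlam, Or.inl ?_⟩
      rw [comp_eq, hlam2]
      have h9 : u ^ 9 = u := by linear_combination (u ^ 7 - u ^ 5 + u ^ 3 - u) * hu2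
      have h7 : u ^ 7 = -u := by linear_combination (u ^ 5 - u ^ 3 + u) * hu2
      have h3 : u ^ 3 = -u := by linear_combination u * hu2
      rw [f_eq, h9, h7, h3]
      simp only [map_neg, map_mul]
      ring
end
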